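/- Lower bound on suboptimality: let K_* ∈ S satisfy N_{K_*} = 0 with P := R + Bᵀ X_* B ≻ 0, and let K ∈ S with value matrix X and Y solving A_K Y A_Kᵀ + Σ = Y with Σ ≻ 0. Then f(K) − f(K_*) = Tr((K−K_*)ᵀ P (K−K_*) Y) ≥ λ₁(Y) λ₁(P) ‖K − K_*‖_F², where λ₁ denotes the smallest eigenvalue. -/

import Mathlib

/-!
Write `E = A - B K`, `Δ = K - K_*` and `P = R + Bᵀ X_* B`. The stationarity condition
`R K_* = Bᵀ X_* (A - B K_*)` turns the difference of the two Lyapunov equations into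
`X - X_* = Eᵀ (X - X_*) E + Δᵀ P Δ`; pairing it with the adjoint equation `E Y Eᵀ + Σ = Y`
through cyclicity of the trace gives `Tr((X - X_*) Σ) = Tr(Δᵀ P Δ Y)`.

The bound applies `λ₁(N) Tr(M) ≤ Tr(M N)` for `M ⪰ 0` (since `N - λ₁(N) I ⪰ 0`) twice.
It needs `λ₁(Y) ≥ 0`, i.e. `Y ⪰ 0`: the quadratic forms of `Eᵏ Y (Eᵏ)ᵀ` decrease in `k`
because `Σ ⪰ 0`, and they tend to `0` because `Eᵏ → 0` for Schur stable `E` by Gelfand's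
formula.
-/

open Matrix
open scoped ENNReal

/-- Spectral radius of a real square matrix, computed over ℂ. -/
noncomputable def specRad {n : ℕ} (A : Matrix (Fin n) (Fin n) ℝ) : ℝ≥0∞ :=
  spectralRadius ℂ (A.map Complex.ofReal)

/-- A real square matrix is Schur stable if its spectral radius is `< 1`. -/
def IsSchur {n : ℕ} (A : Matrix (Fin n) (Fin n) ℝ) : Prop := specRad A < 1

open Filter Topology
open scoped MatrixOrder ComplexOrder

theorem tendsto_pow_atTop_nhds_zero_of_spectralRadius_lt_one {A : Type*} [NormedRing A]
    [NormedAlgebra ℂ A] [CompleteSpace A] {a : A} (ha : spectralRadius ℂ a < 1) :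
    Tendsto (fun k : ℕ => a ^ k) atTop (𝓝 0) := by
  obtain ⟨r, hρr, hr1⟩ := ENNReal.lt_iff_exists_nnreal_btwn.mp ha
  have hgelfand := spectrum.pow_nnnorm_pow_one_div_tendsto_nhds_spectralRadius a
  have hle : ∀ᶠ k : ℕ in atTop, ‖a ^ k‖ ≤ (r : ℝ) ^ k := by
    filter_upwards [hgelfand.eventually_lt_const hρr, eventually_gt_atTop 0] with k hk hk0
    rw [one_div, ENNReal.rpow_inv_lt_iff (by positivity), ENNReal.rpow_natCast,
      ← ENNReal.coe_pow, ENNReal.coe_lt_coe] at hk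
    exact_mod_cast hk.le
  exact squeeze_zero_norm' hle
    (tendsto_pow_atTop_nhds_zero_of_lt_one r.2 (by exact_mod_cast ENNReal.coe_lt_one_iff.mp hr1))

theorem IsSchur.tendsto_pow_atTop_nhds_zero {n : ℕ} {E : Matrix (Fin n) (Fin n) ℝ}
    (hE : IsSchur E) : Tendsto (fun k : ℕ => E ^ k) atTop (𝓝 0) := by
  have hC : Tendsto (fun k : ℕ => (E ^ k).map Complex.ofReal) atTop (𝓝 0) := by
    -- Any Banach algebra norm will do; the `ℓ∞` operator norm induces the product topology.
    let _ := Matrix.linftyOpNormedRing (n := Fin n) (α := ℂ)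
    let _ := Matrix.linftyOpNormedAlgebra (n := Fin n) (α := ℂ) (R := ℂ)
    have _ : CompleteSpace (Matrix (Fin n) (Fin n) ℂ) := FiniteDimensional.complete ℂ _
    exact (tendsto_pow_atTop_nhds_zero_of_spectralRadius_lt_one hE).congr fun k =>
      (Matrix.map_pow E Complex.ofRealHom k).symm
  have hre : Continuous fun M : Matrix (Fin n) (Fin n) ℂ => M.map Complex.re :=
    continuous_id.matrix_map Complex.continuous_re
  simpa [Function.comp_def, Matrix.map_map] using (hre.tendsto 0).comp hC

namespace Matrix

theorem IsHermitian.posSemidef_of_lyapunov_eq {ι : Type*} [Fintype ι] [DecidableEq ι]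
    {E Sig Y : Matrix ι ι ℝ} (hYh : Y.IsHermitian)
    (hE : Tendsto (fun k : ℕ => E ^ k) atTop (𝓝 0)) (hSig : Sig.PosSemidef)
    (hY : E * Y * Eᵀ + Sig = Y) : Y.PosSemidef := by
  refine PosSemidef.of_dotProduct_mulVec_nonneg hYh fun v => ?_
  set q : ℕ → ℝ := fun k => v ⬝ᵥ ((E ^ k * Y * (E ^ k)ᵀ) *ᵥ v) with hq
  have hanti : Antitone q := antitone_nat_of_succ_le fun k => by
    have hstep : E ^ (k + 1) * Y * (E ^ (k + 1))ᵀ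
        = E ^ k * Y * (E ^ k)ᵀ - E ^ k * Sig * (E ^ k)ᵀ := by
      calc E ^ (k + 1) * Y * (E ^ (k + 1))ᵀ = E ^ k * (E * Y * Eᵀ) * (E ^ k)ᵀ := by
            simp only [pow_succ, transpose_mul, Matrix.mul_assoc]
        _ = _ := by rw [eq_sub_of_add_eq hY, Matrix.mul_sub, Matrix.sub_mul]
    have hdecr := (hSig.mul_mul_conjTranspose_same (E ^ k)).dotProduct_mulVec_nonneg v
    simp only [star_trivial, conjTranspose_eq_transpose_of_trivial] at hdecr
    simp only [hq, hstep, sub_mulVec, dotProduct_sub]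
    linarith
  have hlim : Tendsto q atTop (𝓝 0) := by
    have hcont : Continuous fun M : Matrix ι ι ℝ => v ⬝ᵥ ((M * Y * Mᵀ) *ᵥ v) := by
      fun_prop
    simpa [hq, Function.comp_def] using (hcont.tendsto 0).comp hE
  simpa [hq] using hanti.le_of_tendsto hlim 0

theorem PosSemidef.trace_mul_nonneg {𝕜 n : Type*} [RCLike 𝕜] [Fintype n] [DecidableEq n]
    {M N : Matrix n n 𝕜} (hM : M.PosSemidef) (hN : N.PosSemidef) : 0 ≤ (M * N).trace := by
  obtain ⟨B, rfl⟩ := CStarAlgebra.nonneg_iff_eq_star_mul_self.mp hN.nonneg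
  rw [← Matrix.mul_assoc, trace_mul_comm, ← Matrix.mul_assoc, star_eq_conjTranspose]
  exact (hM.mul_mul_conjTranspose_same B).trace_nonneg

theorem IsHermitian.iInf_eigenvalues_smul_one_le {𝕜 n : Type*} [RCLike 𝕜] [Fintype n]
    [DecidableEq n] {A : Matrix n n 𝕜} (hA : A.IsHermitian) :
    (⨅ i, hA.eigenvalues i) • (1 : Matrix n n 𝕜) ≤ A := by
  rw [← Algebra.algebraMap_eq_smul_one, algebraMap_le_iff_le_spectrum hA.isSelfAdjoint,
    hA.spectrum_real_eq_range_eigenvalues]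
  rintro _ ⟨i, rfl⟩
  exact ciInf_le (Finite.bddBelow_range _) i

theorem IsHermitian.iInf_eigenvalues_mul_trace_le {n : Type*} [Fintype n] [DecidableEq n]
    {M N : Matrix n n ℝ} (hN : N.IsHermitian) (hM : M.PosSemidef) :
    (⨅ i, hN.eigenvalues i) * M.trace ≤ (M * N).trace := by
  have h := hM.trace_mul_nonneg (le_iff.mp hN.iInf_eigenvalues_smul_one_le)
  rwa [Matrix.mul_sub, trace_sub, Matrix.mul_smul, Matrix.mul_one, trace_smul, smul_eq_mul,
    sub_nonneg] at h

theorem IsHermitian.iInf_eigenvalues_mul_trace_transpose_mul_le {m n : Type*} [Fintype m]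
    [Fintype n] [DecidableEq m] {P : Matrix m m ℝ} (hP : P.IsHermitian) (D : Matrix m n ℝ) :
    (⨅ i, hP.eigenvalues i) * (Dᵀ * D).trace ≤ (Dᵀ * P * D).trace := by
  have hDD : (D * Dᵀ).PosSemidef := by
    simpa only [conjTranspose_eq_transpose_of_trivial] using posSemidef_self_mul_conjTranspose D
  rw [trace_mul_comm Dᵀ D, trace_mul_comm (Dᵀ * P) D, ← Matrix.mul_assoc]
  exact hP.iInf_eigenvalues_mul_trace_le hDD

theorem trace_mul_eq_of_lyapunov_eq {n R : Type*} [Fintype n] [CommRing R]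
    {D E M Y Sig : Matrix n n R} (hD : Eᵀ * D * E + M = D) (hY : E * Y * Eᵀ + Sig = Y) :
    (D * Sig).trace = (M * Y).trace := by
  rw [eq_sub_of_add_eq' hY, eq_sub_of_add_eq' hD, Matrix.mul_sub, Matrix.sub_mul, trace_sub,
    trace_sub, ← Matrix.mul_assoc, ← Matrix.mul_assoc, trace_mul_comm (D * E * Y) Eᵀ]
  simp only [Matrix.mul_assoc]

end Matrix

theorem lyapunov_value_sub_of_stationary {m n α : Type*} [Fintype m] [Fintype n] [CommRing α]
    {A Q X Xs : Matrix n n α} {B : Matrix n m α} {R : Matrix m m α} {K Ks : Matrix m n α}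
    (hR : Rᵀ = R) (hXs : Xsᵀ = Xs)
    (hLyap : (A - B * K)ᵀ * X * (A - B * K) + Q + Kᵀ * R * K = X)
    (hLyaps : (A - B * Ks)ᵀ * Xs * (A - B * Ks) + Q + Ksᵀ * R * Ks = Xs)
    (hNs : R * Ks - Bᵀ * Xs * (A - B * Ks) = 0) :
    (A - B * K)ᵀ * (X - Xs) * (A - B * K) + (K - Ks)ᵀ * (R + Bᵀ * Xs * B) * (K - Ks)
      = X - Xs := by
  rw [← sub_eq_zero]
  calc _ = ((A - B * K)ᵀ * X * (A - B * K) + Q + Kᵀ * R * K - X)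
        - ((A - B * Ks)ᵀ * Xs * (A - B * Ks) + Q + Ksᵀ * R * Ks - Xs)
        - (K - Ks)ᵀ * (R * Ks - Bᵀ * Xs * (A - B * Ks))
        - (R * Ks - Bᵀ * Xs * (A - B * Ks))ᵀ * (K - Ks) := by
        simp only [transpose_sub, transpose_mul, transpose_transpose, hR, hXs, Matrix.sub_mul,
          Matrix.mul_sub, Matrix.add_mul, Matrix.mul_add, Matrix.mul_assoc]
        abel
    _ = 0 := by rw [sub_eq_zero.mpr hLyap, sub_eq_zero.mpr hLyaps, hNs]; simp

theorem stmt12_general {n m : ℕ} (A : Matrix (Fin n) (Fin n) ℝ) (B : Matrix (Fin n) (Fin m) ℝ)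
    (Q : Matrix (Fin n) (Fin n) ℝ) (R : Matrix (Fin m) (Fin m) ℝ)
    (Sig : Matrix (Fin n) (Fin n) ℝ)
    (hR : Rᵀ = R) (hSig : Sig.PosDef)
    (Ks : Matrix (Fin m) (Fin n) ℝ) (Xs : Matrix (Fin n) (Fin n) ℝ)
    (hXs : Xsᵀ = Xs)
    (hLyaps : (A - B * Ks)ᵀ * Xs * (A - B * Ks) + Q + Ksᵀ * R * Ks = Xs)
    (hNs : R * Ks - Bᵀ * Xs * (A - B * Ks) = 0)
    (hPs : (R + Bᵀ * Xs * B).PosDef)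
    (K : Matrix (Fin m) (Fin n) ℝ) (X Y : Matrix (Fin n) (Fin n) ℝ)
    (hS : IsSchur (A - B * K))
    (hLyap : (A - B * K)ᵀ * X * (A - B * K) + Q + Kᵀ * R * K = X)
    (hY : (A - B * K) * Y * (A - B * K)ᵀ + Sig = Y)
    (hYh : Y.IsHermitian) :
    (X * Sig).trace - (Xs * Sig).trace
      = ((K - Ks)ᵀ * (R + Bᵀ * Xs * B) * (K - Ks) * Y).trace ∧
    (⨅ i, hYh.eigenvalues i) * (⨅ i, hPs.1.eigenvalues i)
        * ((K - Ks)ᵀ * (K - Ks)).trace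
      ≤ (X * Sig).trace - (Xs * Sig).trace := by
  have htrace : (X * Sig).trace - (Xs * Sig).trace
      = ((K - Ks)ᵀ * (R + Bᵀ * Xs * B) * (K - Ks) * Y).trace := by
    rw [← trace_sub, ← Matrix.sub_mul]
    exact trace_mul_eq_of_lyapunov_eq
      (lyapunov_value_sub_of_stationary hR hXs hLyap hLyaps hNs) hY
  refine ⟨htrace, htrace ▸ ?_⟩
  have hYpsd : Y.PosSemidef :=
    hYh.posSemidef_of_lyapunov_eq hS.tendsto_pow_atTop_nhds_zero hSig.posSemidef hY
  have hM : ((K - Ks)ᵀ * (R + Bᵀ * Xs * B) * (K - Ks)).PosSemidef := by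
    simpa using hPs.posSemidef.conjTranspose_mul_mul_same (K - Ks)
  calc (⨅ i, hYh.eigenvalues i) * (⨅ i, hPs.1.eigenvalues i) * ((K - Ks)ᵀ * (K - Ks)).trace
      = (⨅ i, hYh.eigenvalues i)
        * ((⨅ i, hPs.1.eigenvalues i) * ((K - Ks)ᵀ * (K - Ks)).trace) := mul_assoc _ _ _
    _ ≤ (⨅ i, hYh.eigenvalues i) * ((K - Ks)ᵀ * (R + Bᵀ * Xs * B) * (K - Ks)).trace :=
        mul_le_mul_of_nonneg_left (hPs.1.iInf_eigenvalues_mul_trace_transpose_mul_le _)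
          (Real.iInf_nonneg hYpsd.eigenvalues_nonneg)
    _ ≤ _ := hYh.iInf_eigenvalues_mul_trace_le hM

/-- Lower bound on suboptimality:
`f(K) − f(K_*) = Tr((K−K_*)ᵀ P (K−K_*) Y) ≥ λ₁(Y) λ₁(P) ‖K − K_*‖_F²`. -/
theorem stmt12 {n m : ℕ} (A : Matrix (Fin n) (Fin n) ℝ) (B : Matrix (Fin n) (Fin m) ℝ)
    (Q : Matrix (Fin n) (Fin n) ℝ) (R : Matrix (Fin m) (Fin m) ℝ)
    (Sig : Matrix (Fin n) (Fin n) ℝ)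
    (hQ : Qᵀ = Q) (hR : Rᵀ = R) (hSig : Sig.PosDef)
    (Ks : Matrix (Fin m) (Fin n) ℝ) (Xs : Matrix (Fin n) (Fin n) ℝ)
    (hXs : Xsᵀ = Xs) (hSs : IsSchur (A - B * Ks))
    (hLyaps : (A - B * Ks)ᵀ * Xs * (A - B * Ks) + Q + Ksᵀ * R * Ks = Xs)
    (hNs : R * Ks - Bᵀ * Xs * (A - B * Ks) = 0)
    (hPs : (R + Bᵀ * Xs * B).PosDef)
    (K : Matrix (Fin m) (Fin n) ℝ) (X Y : Matrix (Fin n) (Fin n) ℝ)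
    (hX : Xᵀ = X) (hS : IsSchur (A - B * K))
    (hLyap : (A - B * K)ᵀ * X * (A - B * K) + Q + Kᵀ * R * K = X)
    (hY : (A - B * K) * Y * (A - B * K)ᵀ + Sig = Y)
    (hYh : Y.IsHermitian) :
    (X * Sig).trace - (Xs * Sig).trace
      = ((K - Ks)ᵀ * (R + Bᵀ * Xs * B) * (K - Ks) * Y).trace ∧
    (⨅ i, hYh.eigenvalues i) * (⨅ i, hPs.1.eigenvalues i)
        * ((K - Ks)ᵀ * (K - Ks)).trace
      ≤ (X * Sig).trace - (Xs * Sig).trace :=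
  stmt12_general A B Q R Sig hR hSig Ks Xs hXs hLyaps hNs hPs K X Y hS hLyap hY hYh
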